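/- arXiv:1910.01714 — 3 statements merged into one kernel-verified Lean document; each statement's English description precedes it below -/
import Mathlib

section
/- The countable decoupled system ẋᵢ = -xᵢ³, i ∈ ℕ, is not uniformly globally asymptotically stable in the ℓ_p norm for any p ∈ [1,∞). More precisely: each scalar solution with initial value r > 0 is x(t) = r/√(1+2r²t), and there cannot exist β ∈ 𝒦ℒ such that for all initial states x⁰ ∈ ℓ_p and all t ≥ 0 the solution satisfies ‖x(t)‖_{ℓ_p} ≤ β(‖x⁰‖_{ℓ_p}, t). (Counterexample: for fixed t, choosing initial conditions x⁰ with all mass on coordinates of magnitude ε → 0 but constant ℓ_p norm shows the decay cannot be uniform.) -/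
/-!
On a vector whose nonzero entries all equal `c`, the flow of `ẋᵢ = -xᵢ³` at time `t` acts as
multiplication by `(1 + 2c²t)^(-1/2)`. The unit vectors `N^(-1/p) (1, …, 1, 0, …)` of `ℓ_p`
(with `N` ones) therefore have flows of norm `(1 + 2 N^(-2/p) t)^(-1/2) → 1` as `N → ∞`, so a
`𝒦ℒ` bound would force `β(1, t) ≥ 1` for every `t`, contradicting `β(1, t) → 0`.
-/

/-- A class 𝒦 comparison function: continuous, strictly increasing on ℝ₊, zero at zero. -/
def IsClassK (γ : ℝ → ℝ) : Prop :=
  ContinuousOn γ (Set.Ici 0) ∧ StrictMonoOn γ (Set.Ici 0) ∧ γ 0 = 0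

/-- A class 𝒦_∞ comparison function: class 𝒦 and unbounded. -/
def IsClassKinf (γ : ℝ → ℝ) : Prop :=
  IsClassK γ ∧ Filter.Tendsto γ Filter.atTop Filter.atTop

/-- A class 𝒦ℒ comparison function. -/
def IsClassKL (β : ℝ → ℝ → ℝ) : Prop :=
  ContinuousOn (fun p : ℝ × ℝ => β p.1 p.2) (Set.Ici 0 ×ˢ Set.Ici 0) ∧
  (∀ t, 0 ≤ t → IsClassK fun r => β r t) ∧
  (∀ r, 0 < r → StrictAntiOn (fun t => β r t) (Set.Ici 0) ∧
    Filter.Tendsto (fun t => β r t) Filter.atTop (nhds 0))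

open Filter Topology

noncomputable def cubicFlow (t r : ℝ) : ℝ := r / √(1 + 2 * r ^ 2 * t)

theorem cubicFlow_zero_left (r : ℝ) : cubicFlow 0 r = r := by
  simp [cubicFlow]

theorem hasDerivAt_cubicFlow (r : ℝ) {t : ℝ} (ht : 0 ≤ t) :
    HasDerivAt (fun τ => cubicFlow τ r) (-(cubicFlow t r) ^ 3) t := by
  have hpos : 0 < 1 + 2 * r ^ 2 * t := by positivity
  have hlin : HasDerivAt (fun τ => 1 + 2 * r ^ 2 * τ) (2 * r ^ 2) t := by
    simpa using ((hasDerivAt_id t).const_mul (2 * r ^ 2)).const_add 1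
  have hsqrt := (Real.hasDerivAt_sqrt hpos.ne').comp t hlin
  refine ((hasDerivAt_const t r).div hsqrt (Real.sqrt_pos.2 hpos).ne').congr_deriv ?_
  simp only [cubicFlow, Function.comp_apply]
  field_simp
  ring

theorem cubicFlow_eq_mul_of_eq_zero_or_eq {t r c : ℝ} (h : r = 0 ∨ r = c) :
    cubicFlow t r = (√(1 + 2 * c ^ 2 * t))⁻¹ * r := by
  rcases h with rfl | rfl <;> simp [cubicFlow, div_eq_inv_mul]

theorem cubicFlow_apply_eq_smul {α : Type*} {p : ENNReal} {x : lp (fun _ : α => ℝ) p} {c : ℝ}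
    (hx : ∀ i, x i = 0 ∨ x i = c) (t : ℝ) (i : α) :
    ((√(1 + 2 * c ^ 2 * t))⁻¹ • x) i = cubicFlow t (x i) :=
  (cubicFlow_eq_mul_of_eq_zero_or_eq (hx i)).symm

noncomputable def lpBlock (p : ENNReal) (N : ℕ) : lp (fun _ : ℕ => ℝ) p :=
  ∑ i ∈ Finset.range N, lp.single p i 1

theorem lpBlock_apply_eq_zero_or_eq_one (p : ENNReal) (N i : ℕ) :
    lpBlock p N i = 0 ∨ lpBlock p N i = 1 := by
  simp only [lpBlock, lp.coeFn_sum, lp.coeFn_single, Finset.sum_apply, Finset.sum_pi_single]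
  split_ifs <;> simp

theorem norm_lpBlock {p : ENNReal} (hp : 0 < p.toReal) (N : ℕ) :
    ‖lpBlock p N‖ = (N : ℝ) ^ p.toReal⁻¹ := by
  have h := lp.norm_sum_single hp (fun _ => (1 : ℝ)) (Finset.range N)
  simp only [norm_one, Real.one_rpow, Finset.sum_const, Finset.card_range, nsmul_eq_mul,
    mul_one] at h
  rw [← Real.rpow_rpow_inv (lp.norm_nonneg' (lpBlock p N)) hp.ne']
  exact congrArg (· ^ p.toReal⁻¹) h

theorem tendsto_norm_lpBlock_inv {p : ENNReal} (hp : 0 < p.toReal) :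
    Tendsto (fun N => ‖lpBlock p N‖⁻¹) atTop (𝓝 0) := by
  simp only [norm_lpBlock hp]
  exact tendsto_inv_atTop_zero.comp <|
    (tendsto_rpow_atTop (inv_pos.2 hp)).comp tendsto_natCast_atTop_atTop

theorem one_le_of_forall_norm_cubicFlow_le {p : ENNReal} (hp : 0 < p.toReal) {t : ℝ}
    (ht : 0 ≤ t) {b : ℝ → ℝ} (hb : ∀ x y : lp (fun _ : ℕ => ℝ) p,
      (∀ i, y i = cubicFlow t (x i)) → ‖y‖ ≤ b ‖x‖) :
    1 ≤ b 1 := by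
  have hp0 : p ≠ 0 := fun h => by simp [h] at hp
  set c : ℕ → ℝ := fun N => ‖lpBlock p N‖⁻¹
  have hlim : Tendsto (fun N => (√(1 + 2 * c N ^ 2 * t))⁻¹) atTop (𝓝 1) := by
    have hcont : Continuous fun a : ℝ => (√(1 + 2 * a ^ 2 * t))⁻¹ :=
      (by fun_prop : Continuous fun a : ℝ => √(1 + 2 * a ^ 2 * t)).inv₀
        fun a => (Real.sqrt_pos.2 (by positivity)).ne'
    have h0 := hcont.tendsto 0
    norm_num at h0
    exact h0.comp (tendsto_norm_lpBlock_inv hp)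
  refine le_of_tendsto hlim ((eventually_ge_atTop 1).mono fun N hN => ?_)
  have hblock : ‖lpBlock p N‖ ≠ 0 := by
    rw [norm_lpBlock hp]
    exact (Real.rpow_pos_of_pos (by exact_mod_cast hN) _).ne'
  set x := c N • lpBlock p N
  have hx : ∀ i, x i = 0 ∨ x i = c N := fun i => by
    rcases lpBlock_apply_eq_zero_or_eq_one p N i with h | h <;> simp [x, h]
  have hxnorm : ‖x‖ = 1 := by
    rw [lp.norm_const_smul hp0, Real.norm_of_nonneg (inv_nonneg.2 (lp.norm_nonneg' _))]
    exact inv_mul_cancel₀ hblock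
  have := hb x _ (cubicFlow_apply_eq_smul hx t)
  rwa [lp.norm_const_smul hp0, hxnorm, mul_one, norm_inv,
    Real.norm_of_nonneg (Real.sqrt_nonneg _)] at this

/-- the countable decoupled system `ẋᵢ = -xᵢ³`, `i ∈ ℕ`, whose scalar
solutions with initial value `r > 0` are `x(t) = r/√(1+2r²t)`, is not 0-UGAS in
the `ℓ_p` norm for any `p ∈ [1,∞)`: there is no `β ∈ 𝒦ℒ` bounding all solutions by
`β(‖x⁰‖_{ℓ_p}, t)`. -/
theorem lp_system_not_UGAS (p : ENNReal) (hp1 : 1 ≤ p) (hp2 : p ≠ ⊤) :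
    (∀ r : ℝ, 0 < r →
      r / Real.sqrt (1 + 2 * r ^ 2 * 0) = r ∧
      ∀ t : ℝ, 0 ≤ t →
        HasDerivAt (fun τ : ℝ => r / Real.sqrt (1 + 2 * r ^ 2 * τ))
          (-(r / Real.sqrt (1 + 2 * r ^ 2 * t)) ^ 3) t) ∧
    ¬ ∃ β : ℝ → ℝ → ℝ, IsClassKL β ∧
        ∀ (x : lp (fun _ : ℕ => ℝ) p) (t : ℝ), 0 ≤ t →
          ∀ y : lp (fun _ : ℕ => ℝ) p,
            (∀ i : ℕ, y i = x i / Real.sqrt (1 + 2 * (x i) ^ 2 * t)) →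
            ‖y‖ ≤ β ‖x‖ t := by
  refine ⟨fun r _ => ⟨cubicFlow_zero_left r, fun t ht => hasDerivAt_cubicFlow r ht⟩, ?_⟩
  rintro ⟨β, hβ, hbound⟩
  have hp : 0 < p.toReal := ENNReal.toReal_pos (zero_lt_one.trans_le hp1).ne' hp2
  have hge : ∀ᶠ t in atTop, 1 ≤ β 1 t := (eventually_ge_atTop 0).mono fun t ht =>
    one_le_of_forall_norm_cubicFlow_le (b := (β · t)) hp ht fun x y hy => hbound x t ht y hy
  have hle : (1 : ℝ) ≤ 0 := ge_of_tendsto (hβ.2.2 1 one_pos).2 hge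
  norm_num at hle
end

section
/- (Convergent input uniformly convergent state.) Let Σ = (X, 𝒰, φ) be a forward-complete control system satisfying the cocycle property, the axiom of shift invariance, and an ISS estimate: there exist β ∈ 𝒦ℒ and γ ∈ 𝒦_∞ such that ‖φ(t,x,u)‖_X ≤ β(‖x‖_X, t) + γ(‖u‖_𝒰) for all t ≥ 0, x ∈ X, u ∈ 𝒰. Then for every input u ∈ 𝒰 with lim_{t→∞} ‖u(·+t)‖_𝒰 = 0 and every r > 0, it holds that lim_{t→∞} sup_{‖x‖_X ≤ r} ‖φ(t,x,u)‖_X = 0. -/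
/-- convergent input uniformly convergent state.  For a forward-complete
control system with transition map `φ`, input shift `S` satisfying the axiom of shift
invariance and the cocycle property, an ISS estimate implies: for every input `u` with
`‖u(·+t)‖_𝒰 → 0` and every `r > 0`, `sup_{‖x‖ ≤ r} ‖φ(t,x,u)‖ → 0` as `t → ∞`. -/
theorem convergent_input_uniformly_convergent_state
    {X 𝒰 : Type*} [NormedAddCommGroup X] [NormedAddCommGroup 𝒰]
    (φ : ℝ → X → 𝒰 → X) (S : ℝ → 𝒰 → 𝒰)
    (hshift : ∀ τ : ℝ, 0 ≤ τ → ∀ u : 𝒰, ‖S τ u‖ ≤ ‖u‖)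
    (hcocycle : ∀ t h : ℝ, 0 ≤ t → 0 ≤ h → ∀ (x : X) (u : 𝒰),
      φ (t + h) x u = φ h (φ t x u) (S t u))
    (β : ℝ → ℝ → ℝ) (γ : ℝ → ℝ) (hβ : IsClassKL β) (hγ : IsClassKinf γ)
    (hISS : ∀ t, 0 ≤ t → ∀ (x : X) (u : 𝒰), ‖φ t x u‖ ≤ β ‖x‖ t + γ ‖u‖)
    (u : 𝒰) (hu : Filter.Tendsto (fun t : ℝ => ‖S t u‖) Filter.atTop (nhds 0))
    (r : ℝ) (hr : 0 < r) :
    ∀ ε > 0, ∃ T : ℝ, ∀ t ≥ T, ∀ x : X, ‖x‖ ≤ r → ‖φ t x u‖ ≤ ε := by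
  intro ε hε
  -- γ composed with the shifted input norm tends to 0
  have hγ0 : γ 0 = 0 := hγ.1.2.2
  have hγcont : Filter.Tendsto γ (nhdsWithin 0 (Set.Ici 0)) (nhds 0) := by
    have := hγ.1.1 0 (Set.self_mem_Ici)
    simpa [ContinuousWithinAt, hγ0] using this
  have hg : Filter.Tendsto (fun t : ℝ => γ ‖S t u‖) Filter.atTop (nhds 0) := by
    refine hγcont.comp ?_
    rw [tendsto_nhdsWithin_iff]
    exact ⟨hu, Filter.Eventually.of_forall fun t => norm_nonneg _⟩
  obtain ⟨T1, hT1⟩ := (Filter.eventually_atTop).1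
    (hg.eventually (gt_mem_nhds (by linarith : (0:ℝ) < ε / 2)))
  set T1' := max T1 0 with hT1'def
  have hT1'0 : (0:ℝ) ≤ T1' := le_max_right _ _
  set R : ℝ := max (β r T1' + γ ‖u‖) 1 with hRdef
  have hRpos : 0 < R := lt_of_lt_of_le one_pos (le_max_right _ _)
  obtain ⟨T2, hT2⟩ := (Filter.eventually_atTop).1
    (((hβ.2.2 R hRpos).2).eventually (gt_mem_nhds (by linarith : (0:ℝ) < ε / 2)))
  refine ⟨T1' + max T2 0, fun t ht x hx => ?_⟩
  set h := t - T1' with hhdef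
  have hh0 : 0 ≤ h := by
    have := le_max_right T2 0; simp only [hhdef]; linarith
  have hhT2 : T2 ≤ h := by
    have := le_max_left T2 0; simp only [hhdef]; linarith
  have hco : φ t x u = φ h (φ T1' x u) (S T1' u) := by
    have := hcocycle T1' h hT1'0 hh0 x u
    simpa [hhdef] using this
  -- bound the intermediate state
  have hmono1 : β ‖x‖ T1' ≤ β r T1' :=
    ((hβ.2.1 T1' hT1'0).2.1.monotoneOn) (norm_nonneg x) (Set.mem_Ici.2 hr.le) hx
  have hmid : ‖φ T1' x u‖ ≤ R := by
    have := hISS T1' hT1'0 x u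
    have : ‖φ T1' x u‖ ≤ β r T1' + γ ‖u‖ := by linarith
    exact this.trans (le_max_left _ _)
  -- apply ISS from time T1'
  have hISS2 := hISS h hh0 (φ T1' x u) (S T1' u)
  have hmono2 : β ‖φ T1' x u‖ h ≤ β R h :=
    ((hβ.2.1 h hh0).2.1.monotoneOn) (norm_nonneg _) (Set.mem_Ici.2 hRpos.le) hmid
  have hβsmall : β R h < ε / 2 := hT2 h hhT2
  have hγmono : γ ‖S T1' u‖ ≤ γ ‖S T1' u‖ := le_rfl
  have hγsmall : γ ‖S T1' u‖ < ε / 2 := hT1 T1' (le_max_left _ _)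
  rw [hco]
  linarith
end

section
/- (UGS from an ISS Lyapunov function in dissipative form, trajectory-free scalar lemma.) Let ψ₁, ψ₂ ∈ 𝒦_∞, α ∈ 𝒦_∞ and σ ∈ 𝒦. Suppose v : ℝ₊ → ℝ₊ is locally absolutely continuous, c ≥ 0, and for almost every t, v'(t) ≤ -α(ψ₂⁻¹(v(t))) + σ(c). Then for all t ≥ 0, v(t) ≤ max{ v(0), ψ₂(α⁻¹(σ(c))) }. -/
open MeasureTheory

/-- UGS from an ISS Lyapunov function in dissipative form, scalar
forward-invariance lemma: if a nonnegative locally absolutely continuous `v` (with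
density `W`) satisfies `v'(t) ≤ -α(ψ₂⁻¹(v(t))) + σ(c)` for a.e. `t ≥ 0`, then
`v(t) ≤ max{v(0), ψ₂(α⁻¹(σ(c)))}` for all `t ≥ 0`. -/
theorem dissipative_Lyapunov_forward_invariance
    (ψ₁ ψ₂ α σ : ℝ → ℝ)
    (hψ₁ : IsClassKinf ψ₁) (hψ₂ : IsClassKinf ψ₂)
    (hα : IsClassKinf α) (hσ : IsClassK σ)
    (ψ₂inv αinv : ℝ → ℝ)
    (hψ₂inv : ∀ r : ℝ, 0 ≤ r → ψ₂ (ψ₂inv r) = r ∧ ψ₂inv (ψ₂ r) = r ∧ 0 ≤ ψ₂inv r)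
    (hαinv : ∀ r : ℝ, 0 ≤ r → α (αinv r) = r ∧ αinv (α r) = r ∧ 0 ≤ αinv r)
    (v W : ℝ → ℝ) (hv_nonneg : ∀ t, 0 ≤ v t)
    (hW_int : ∀ p q : ℝ, IntervalIntegrable W volume p q)
    (hFTC : ∀ p q : ℝ, 0 ≤ p → p ≤ q → v q - v p = ∫ t in p..q, W t)
    (c : ℝ) (hc : 0 ≤ c)
    (hineq : ∀ᵐ t ∂volume, 0 ≤ t → W t ≤ -α (ψ₂inv (v t)) + σ c) :
    ∀ t, 0 ≤ t → v t ≤ max (v 0) (ψ₂ (αinv (σ c))) := by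
  set M : ℝ := max (v 0) (ψ₂ (αinv (σ c))) with hM
  -- basic nonnegativity facts
  have hσc : 0 ≤ σ c := by
    have := hσ.2.1.monotoneOn (Set.self_mem_Ici) (Set.mem_Ici.mpr hc) hc
    simpa [hσ.2.2] using this
  have hαinvσ : 0 ≤ αinv (σ c) := (hαinv (σ c) hσc).2.2
  -- key: if v u > M then W u ≤ ... < 0 (given the a.e. inequality at u)
  have key : ∀ u : ℝ, M < v u → -α (ψ₂inv (v u)) + σ c < 0 := by
    intro u hu
    have hvM : ψ₂ (αinv (σ c)) < v u := lt_of_le_of_lt (le_max_right _ _) hu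
    have hψinv_nonneg : 0 ≤ ψ₂inv (v u) := (hψ₂inv (v u) (hv_nonneg u)).2.2
    have h1 : αinv (σ c) < ψ₂inv (v u) := by
      by_contra h
      push_neg at h
      have := hψ₂.1.2.1.monotoneOn (Set.mem_Ici.mpr hψinv_nonneg)
        (Set.mem_Ici.mpr hαinvσ) h
      rw [(hψ₂inv (v u) (hv_nonneg u)).1] at this
      exact absurd this (not_le.mpr hvM)
    have h2 : σ c < α (ψ₂inv (v u)) := by
      have := hα.1.2.1 (Set.mem_Ici.mpr hαinvσ) (Set.mem_Ici.mpr hψinv_nonneg) h1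
      rwa [(hαinv (σ c) hσc).1] at this
    linarith
  -- v agrees on Ici 0 with a continuous primitive
  have hg : Continuous fun u => v 0 + ∫ x in (0:ℝ)..u, W x :=
    continuous_const.add (intervalIntegral.continuous_primitive (fun a b => hW_int a b) 0)
  have hvg : ∀ u : ℝ, 0 ≤ u → v u = v 0 + ∫ x in (0:ℝ)..u, W x := by
    intro u hu
    have := hFTC 0 u le_rfl hu
    linarith
  intro t ht
  by_contra hcon
  push_neg at hcon
  -- the set of points in [0, t] where v ≤ M
  set S : Set ℝ := Set.Icc 0 t ∩ {u | v 0 + ∫ x in (0:ℝ)..u, W x ≤ M} with hS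
  have h0S : (0:ℝ) ∈ S := by
    constructor
    · exact Set.mem_Icc.mpr ⟨le_rfl, ht⟩
    · simp only [Set.mem_setOf_eq, intervalIntegral.integral_same, add_zero]
      exact le_max_left _ _
  have hSne : S.Nonempty := ⟨0, h0S⟩
  have hSbdd : BddAbove S := ⟨t, fun x hx => hx.1.2⟩
  have hSclosed : IsClosed S := isClosed_Icc.inter (isClosed_le (hg.comp continuous_id') continuous_const)
  set s : ℝ := sSup S with hs
  have hsS : s ∈ S := hSclosed.csSup_mem hSne hSbdd
  have hs0 : 0 ≤ s := hsS.1.1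
  have hst : s ≤ t := hsS.1.2
  have hvs : v s ≤ M := by rw [hvg s hs0]; exact hsS.2
  have hsnet : s ≠ t := by
    intro h
    rw [h] at hvs
    exact absurd hvs (not_le.mpr hcon)
  have hslt : s < t := lt_of_le_of_ne hst hsnet
  -- on (s, t], v > M
  have hgt : ∀ u : ℝ, u ∈ Set.Ioc s t → M < v u := by
    intro u hu
    by_contra h
    push_neg at h
    have huS : u ∈ S := by
      refine ⟨Set.mem_Icc.mpr ⟨hs0.trans hu.1.le, hu.2⟩, ?_⟩
      have := hvg u (hs0.trans hu.1.le)
      simp only [Set.mem_setOf_eq]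
      linarith
    exact absurd (le_csSup hSbdd huS) (not_le.mpr hu.1)
  -- W ≤ 0 a.e. on [s, t]
  have hWae : W ≤ᵐ[volume.restrict (Set.Icc s t)] (fun _ => (0:ℝ)) := by
    have hns : ∀ᵐ u ∂volume, u ≠ s := by
      have : volume ({s} : Set ℝ) = 0 := measure_singleton s
      exact compl_mem_ae_iff.mpr this
    have h := hineq.and hns
    rw [Filter.EventuallyLE, ae_restrict_iff' measurableSet_Icc]
    filter_upwards [h] with u ⟨h1, h2⟩ hu
    have hu0 : 0 ≤ u := hs0.trans hu.1
    have huIoc : u ∈ Set.Ioc s t := ⟨lt_of_le_of_ne hu.1 (Ne.symm h2), hu.2⟩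
    have := key u (hgt u huIoc)
    have := h1 hu0
    linarith
  have hint : (∫ x in s..t, W x) ≤ 0 := by
    have := intervalIntegral.integral_mono_ae_restrict hslt.le (hW_int s t)
      (intervalIntegrable_const) hWae
    simpa using this
  have := hFTC s t hs0 hslt.le
  linarith
end
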